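/- arXiv:0801.2368 — 5 statements merged into one kernel-verified Lean document; each statement's English description precedes it below -/
import Mathlib

section
/- The set of n × n matrices over a Kleene algebra forms a Kleene algebra, with matrix addition and multiplication, zero matrix, identity matrix, and star defined inductively via the 2 × 2 block formula E* = [[F*, F* B D*],[D* C F*, D* + D* C F* B D*]] where E = [[A,B],[C,D]] and F = A + B D* C. -/
open Matrix

/-!
Write `E = [[A, B], [C, D]]`, let `d` be a star of `D` and `f` a star of `F = A + B d C`, and put
`G = [[f, f B d], [d C f, d + d C f B d]]`. The unfolding law `1 + E G ≤ G` is a blockwise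
computation. For the induction law, split `X = [P; R]`: from `E X ≤ X` the star laws of `d` give
`d R ≤ R` and `d C P ≤ R`, hence `F P ≤ P` and then `f P ≤ P`, and these four inequalities bound
every block of `G X` by the corresponding block of `X`; the right-hand law is symmetric.
Induction on `n`, splitting `Fin (n + 1)` as `Fin n ⊕ Fin 1`, gives a star of every square matrix;
it is unique by the induction law, so the block formula holds for any choice of stars.
-/

namespace Matrix

open Computability

/-- Not a global instance: Mathlib also orders square matrices by the Loewner order
`Matrix.instPartialOrder`. -/
abbrev componentwisePartialOrder {ι κ α : Type*} [PartialOrder α] : PartialOrder (Matrix ι κ α) :=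
  inferInstanceAs (PartialOrder (ι → κ → α))

attribute [local instance] componentwisePartialOrder

variable {ι κ μ : Type} {K : Type*} [KleeneAlgebra K]

protected theorem le_def {M N : Matrix ι κ K} : M ≤ N ↔ ∀ i j, M i j ≤ N i j := Iff.rfl

protected theorem zero_le (M : Matrix ι κ K) : 0 ≤ M := fun _ _ => _root_.zero_le

protected theorem add_le_iff {A B C : Matrix ι κ K} : A + B ≤ C ↔ A ≤ C ∧ B ≤ C := by
  simp only [Matrix.le_def, add_apply, _root_.add_le_iff, forall_and]

protected theorem add_le {A B C : Matrix ι κ K} (hA : A ≤ C) (hB : B ≤ C) : A + B ≤ C :=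
  Matrix.add_le_iff.2 ⟨hA, hB⟩

protected theorem le_add_right {A B C : Matrix ι κ K} (h : A ≤ B) : A ≤ B + C :=
  h.trans (Matrix.add_le_iff.1 le_rfl).1

protected theorem le_add_left {A B C : Matrix ι κ K} (h : A ≤ C) : A ≤ B + C :=
  h.trans (Matrix.add_le_iff.1 le_rfl).2

@[gcongr]
protected theorem mul_le_mul [Fintype κ] {A A' : Matrix ι κ K} {B B' : Matrix κ μ K}
    (hA : A ≤ A') (hB : B ≤ B') : A * B ≤ A' * B' := fun i j => by
  simp only [mul_apply]
  gcongr with k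
  exacts [hA i k, hB k j]

protected theorem le_mul_of_one_le_left [Fintype ι] [DecidableEq ι] {A : Matrix ι ι K}
    (h : 1 ≤ A) (B : Matrix ι κ K) : B ≤ A * B :=
  calc B = 1 * B := (Matrix.one_mul B).symm
    _ ≤ A * B := by gcongr

protected theorem le_mul_of_one_le_right [Fintype κ] [DecidableEq κ] {B : Matrix κ κ K}
    (h : 1 ≤ B) (A : Matrix ι κ K) : A ≤ A * B :=
  calc A = A * 1 := (Matrix.mul_one A).symm
    _ ≤ A * B := by gcongr

theorem fromBlocks_le_fromBlocks_iff {A A' : Matrix ι ι K} {B B' : Matrix ι κ K}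
    {C C' : Matrix κ ι K} {D D' : Matrix κ κ K} :
    fromBlocks A B C D ≤ fromBlocks A' B' C' D' ↔ A ≤ A' ∧ B ≤ B' ∧ C ≤ C' ∧ D ≤ D' := by
  simp only [Matrix.le_def, Sum.forall, fromBlocks_apply₁₁, fromBlocks_apply₁₂,
    fromBlocks_apply₂₁, fromBlocks_apply₂₂, forall_and]
  tauto

theorem fromRows_le_fromRows_iff {A A' : Matrix ι μ K} {B B' : Matrix κ μ K} :
    fromRows A B ≤ fromRows A' B' ↔ A ≤ A' ∧ B ≤ B' := by
  simp only [Matrix.le_def, Sum.forall, fromRows_apply_inl, fromRows_apply_inr]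

theorem fromCols_le_fromCols_iff {A A' : Matrix μ ι K} {B B' : Matrix μ κ K} :
    fromCols A B ≤ fromCols A' B' ↔ A ≤ A' ∧ B ≤ B' := by
  simp only [Matrix.le_def, Sum.forall, fromCols_apply_inl, fromCols_apply_inr, forall_and]

theorem reindex_le_reindex_iff {ι' κ' : Type} (e : ι ≃ ι') (e' : κ ≃ κ') {A B : Matrix ι κ K} :
    reindex e e' A ≤ reindex e e' B ↔ A ≤ B :=
  ⟨fun h i j => by simpa using h (e i) (e' j), fun h _ _ => h _ _⟩

theorem reindex_mul_reindex [Fintype κ] {ι' κ' μ' : Type} [Fintype κ'] (e : ι ≃ ι') (e' : κ ≃ κ')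
    (e'' : μ ≃ μ') (M : Matrix ι κ K) (N : Matrix κ μ K) :
    reindex e e' M * reindex e' e'' N = reindex e e'' (M * N) := by
  simp only [reindex_apply, submatrix_mul_equiv]

/-- The induction laws quantify over rectangular `X`: the block step needs them for the row
blocks of `X`, which are no longer square. -/
structure IsStarOf [Fintype ι] [DecidableEq ι] (E x : Matrix ι ι K) : Prop where
  one_le_star : 1 ≤ x
  mul_star_le_star : E * x ≤ x
  star_mul_le_self {μ : Type} {X : Matrix ι μ K} : E * X ≤ X → x * X ≤ X
  mul_star_le_self {μ : Type} {X : Matrix μ ι K} : X * E ≤ X → X * x ≤ X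

namespace IsStarOf

variable [Fintype ι] [DecidableEq ι] {E x y : Matrix ι ι K}

theorem star_mul_le (h : IsStarOf E x) {B X : Matrix ι μ K} (hB : B ≤ X) (hX : E * X ≤ X) :
    x * B ≤ X :=
  calc x * B ≤ x * X := by gcongr
    _ ≤ X := h.star_mul_le_self hX

theorem mul_star_le (h : IsStarOf E x) {B X : Matrix μ ι K} (hB : B ≤ X) (hX : X * E ≤ X) :
    B * x ≤ X :=
  calc B * x ≤ X * x := by gcongr
    _ ≤ X := h.mul_star_le_self hX

theorem star_mul_le_star (h : IsStarOf E x) : x * E ≤ x :=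
  calc x * E ≤ x * x := by
        gcongr
        exact (Matrix.le_mul_of_one_le_right h.one_le_star E).trans h.mul_star_le_star
    _ ≤ x := h.star_mul_le_self h.mul_star_le_star

theorem star_le (hx : IsStarOf E x) (hy : IsStarOf E y) : x ≤ y := by
  simpa using hx.star_mul_le hy.one_le_star hy.mul_star_le_star

theorem unique (hx : IsStarOf E x) (hy : IsStarOf E y) : x = y :=
  le_antisymm (hx.star_le hy) (hy.star_le hx)

theorem reindex {ι' : Type} [Fintype ι'] [DecidableEq ι'] (e : ι ≃ ι') (h : IsStarOf E x) :
    IsStarOf (reindex e e E) (reindex e e x) := by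
  refine ⟨?_, ?_, fun {μ X} hX => ?_, fun {μ X} hX => ?_⟩
  · simpa only [reindex_apply, submatrix_one_equiv] using
      (reindex_le_reindex_iff e e).2 h.one_le_star
  · rw [reindex_mul_reindex, reindex_le_reindex_iff]
    exact h.mul_star_le_star
  · obtain ⟨Y, rfl⟩ := (Matrix.reindex e (Equiv.refl μ)).surjective X
    rw [reindex_mul_reindex, reindex_le_reindex_iff] at hX ⊢
    exact h.star_mul_le_self hX
  · obtain ⟨Y, rfl⟩ := (Matrix.reindex (Equiv.refl μ) e).surjective X
    rw [reindex_mul_reindex, reindex_le_reindex_iff] at hX ⊢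
    exact h.mul_star_le_self hX

end IsStarOf

theorem isStarOf_of_isEmpty [Fintype ι] [DecidableEq ι] [IsEmpty ι] (E x : Matrix ι ι K) :
    IsStarOf E x where
  one_le_star := le_of_eq (Subsingleton.elim _ _)
  mul_star_le_star := le_of_eq (Subsingleton.elim _ _)
  star_mul_le_self _ := le_of_eq (Subsingleton.elim _ _)
  mul_star_le_self _ := le_of_eq (Subsingleton.elim _ _)

theorem isStarOf_of_unique [Fintype ι] [DecidableEq ι] [Unique ι] (E : Matrix ι ι K) :
    IsStarOf E (of fun _ _ => (E default default)∗) := by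
  refine ⟨fun i j => ?_, fun i j => ?_, fun hX i j => ?_, fun hX i j => ?_⟩
  · rw [Subsingleton.elim i j, one_apply_eq]
    exact one_le_kstar
  · rw [Subsingleton.elim i default, Subsingleton.elim j default]
    simp only [mul_apply, Fintype.sum_unique, of_apply]
    exact mul_kstar_le_kstar
  · have hX := hX default j
    simp only [mul_apply, Fintype.sum_unique, of_apply] at hX ⊢
    rw [Subsingleton.elim i default]
    exact kstar_mul_le_self hX
  · have hX := hX i default
    simp only [mul_apply, Fintype.sum_unique, of_apply] at hX ⊢
    rw [Subsingleton.elim j default]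
    exact mul_kstar_le_self hX

section Blocks

variable [Fintype ι] [DecidableEq ι] [Fintype κ] [DecidableEq κ]
  {A : Matrix ι ι K} {B : Matrix ι κ K} {C : Matrix κ ι K} {D d : Matrix κ κ K}
  {f : Matrix ι ι K}

/-- With `d = D*` and `f = (A + B D* C)*` this is the block formula for `(fromBlocks A B C D)*`. -/
def blockStar (B : Matrix ι κ K) (C : Matrix κ ι K) (d : Matrix κ κ K) (f : Matrix ι ι K) :
    Matrix (ι ⊕ κ) (ι ⊕ κ) K :=
  fromBlocks f (f * B * d) (d * C * f) (d + d * C * f * B * d)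

theorem one_le_blockStar (hd : 1 ≤ d) (hf : 1 ≤ f) : 1 ≤ blockStar B C d f := by
  rw [← fromBlocks_one, blockStar, fromBlocks_le_fromBlocks_iff]
  exact ⟨hf, Matrix.zero_le _, Matrix.zero_le _, Matrix.le_add_right hd⟩

theorem fromBlocks_mul_blockStar_le (hd : IsStarOf D d) (hf : IsStarOf (A + B * d * C) f) :
    fromBlocks A B C D * blockStar B C d f ≤ blockStar B C d f := by
  obtain ⟨hAf, hBdCf⟩ := Matrix.add_le_iff.1 (Matrix.add_mul A _ f ▸ hf.mul_star_le_star)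
  have hB : B ≤ f * B := Matrix.le_mul_of_one_le_left hf.one_le_star B
  have hC : C ≤ d * C := Matrix.le_mul_of_one_le_left hd.one_le_star C
  have hDd : D * d ≤ d := hd.mul_star_le_star
  simp only [blockStar, fromBlocks_multiply, fromBlocks_le_fromBlocks_iff, Matrix.mul_add,
    ← Matrix.mul_assoc]
  exact ⟨Matrix.add_le hAf hBdCf,
    Matrix.add_le (by gcongr) (Matrix.add_le (by gcongr) (by gcongr)),
    Matrix.add_le (by gcongr) (by gcongr),
    Matrix.add_le (Matrix.le_add_left (by gcongr))
      (Matrix.add_le (Matrix.le_add_right hDd) (Matrix.le_add_left (by gcongr)))⟩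

theorem blockStar_mul_le_self (hd : IsStarOf D d) (hf : IsStarOf (A + B * d * C) f)
    {X : Matrix (ι ⊕ κ) μ K} (hX : fromBlocks A B C D * X ≤ X) : blockStar B C d f * X ≤ X := by
  rw [← fromRows_toRows X] at hX ⊢
  set P := X.toRows₁
  set R := X.toRows₂
  rw [fromBlocks_mul_fromRows, fromRows_le_fromRows_iff, Matrix.add_le_iff,
    Matrix.add_le_iff] at hX
  obtain ⟨⟨hAP, hBR⟩, hCP, hDR⟩ := hX
  have hdR : d * R ≤ R := hd.star_mul_le_self hDR
  have hdCP : d * (C * P) ≤ R := hd.star_mul_le hCP hDR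
  have hfP : f * P ≤ P := by
    refine hf.star_mul_le_self ?_
    rw [Matrix.add_mul]
    refine Matrix.add_le hAP ?_
    calc B * d * C * P = B * (d * (C * P)) := by simp only [Matrix.mul_assoc]
      _ ≤ B * R := by gcongr
      _ ≤ P := hBR
  have hdCfP : d * (C * (f * P)) ≤ R :=
    calc d * (C * (f * P)) ≤ d * (C * P) := by gcongr
      _ ≤ R := hdCP
  rw [blockStar, fromBlocks_mul_fromRows, fromRows_le_fromRows_iff]
  simp only [Matrix.add_mul, Matrix.mul_assoc]
  refine ⟨Matrix.add_le hfP ?_, Matrix.add_le hdCfP (Matrix.add_le hdR ?_)⟩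
  · calc f * (B * (d * R)) ≤ f * (B * R) := by gcongr
      _ ≤ f * P := by gcongr
      _ ≤ P := hfP
  · calc d * (C * (f * (B * (d * R)))) ≤ d * (C * (f * (B * R))) := by gcongr
      _ ≤ d * (C * (f * P)) := by gcongr
      _ ≤ R := hdCfP

theorem mul_blockStar_le_self (hd : IsStarOf D d) (hf : IsStarOf (A + B * d * C) f)
    {X : Matrix μ (ι ⊕ κ) K} (hX : X * fromBlocks A B C D ≤ X) : X * blockStar B C d f ≤ X := by
  rw [← fromCols_toCols X] at hX ⊢
  set P := X.toCols₁
  set Q := X.toCols₂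
  rw [fromCols_mul_fromBlocks, fromCols_le_fromCols_iff, Matrix.add_le_iff,
    Matrix.add_le_iff] at hX
  obtain ⟨⟨hPA, hQC⟩, hPB, hQD⟩ := hX
  have hQd : Q * d ≤ Q := hd.mul_star_le_self hQD
  have hPBd : P * B * d ≤ Q := hd.mul_star_le hPB hQD
  have hPf : P * f ≤ P := by
    refine hf.mul_star_le_self ?_
    rw [Matrix.mul_add]
    refine Matrix.add_le hPA ?_
    calc P * (B * d * C) = P * B * d * C := by simp only [Matrix.mul_assoc]
      _ ≤ Q * C := by gcongr
      _ ≤ P := hQC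
  have hPfBd : P * f * B * d ≤ Q :=
    calc P * f * B * d ≤ P * B * d := by gcongr
      _ ≤ Q := hPBd
  rw [blockStar, fromCols_mul_fromBlocks, fromCols_le_fromCols_iff]
  simp only [Matrix.mul_add, ← Matrix.mul_assoc]
  refine ⟨Matrix.add_le hPf ?_, Matrix.add_le hPfBd (Matrix.add_le hQd ?_)⟩
  · calc Q * d * C * f ≤ Q * C * f := by gcongr
      _ ≤ P * f := by gcongr
      _ ≤ P := hPf
  · calc Q * d * C * f * B * d ≤ Q * C * f * B * d := by gcongr
      _ ≤ P * f * B * d := by gcongr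
      _ ≤ Q := hPfBd

theorem isStarOf_fromBlocks (hd : IsStarOf D d) (hf : IsStarOf (A + B * d * C) f) :
    IsStarOf (fromBlocks A B C D) (blockStar B C d f) where
  one_le_star := one_le_blockStar hd.one_le_star hf.one_le_star
  mul_star_le_star := fromBlocks_mul_blockStar_le hd hf
  star_mul_le_self := blockStar_mul_le_self hd hf
  mul_star_le_self := mul_blockStar_le_self hd hf

end Blocks

theorem exists_isStarOf_fin (n : ℕ) (E : Matrix (Fin n) (Fin n) K) : ∃ x, IsStarOf E x := by
  induction n with
  | zero => exact ⟨E, isStarOf_of_isEmpty E E⟩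
  | succ n ih =>
    obtain ⟨F, rfl⟩ := (reindex (finSumFinEquiv (n := 1)) finSumFinEquiv).surjective E
    rw [← fromBlocks_toBlocks F]
    obtain ⟨d, hd⟩ : ∃ d, IsStarOf F.toBlocks₂₂ d := ⟨_, isStarOf_of_unique _⟩
    obtain ⟨f, hf⟩ := ih (F.toBlocks₁₁ + F.toBlocks₁₂ * d * F.toBlocks₂₁)
    exact ⟨_, (isStarOf_fromBlocks hd hf).reindex _⟩

theorem exists_isStarOf [Fintype ι] [DecidableEq ι] (E : Matrix ι ι K) : ∃ x, IsStarOf E x := by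
  obtain ⟨F, rfl⟩ := (reindex (Fintype.equivFin ι).symm (Fintype.equivFin ι).symm).surjective E
  obtain ⟨x, hx⟩ := exists_isStarOf_fin _ F
  exact ⟨_, hx.reindex _⟩

end Matrix

/-- Square matrices over a Kleene algebra form a Kleene algebra: there is a
star operation on `n × n` matrices (for every finite index type) satisfying
the Kleene algebra axioms with respect to the componentwise order, and on
block matrices it is given inductively by the `2 × 2` block formula
`E* = [[F*, F* B D*], [D* C F*, D* + D* C F* B D*]]` where
`E = [[A, B], [C, D]]` and `F = A + B D* C`. -/
theorem matrices_form_kleeneAlgebra {K : Type} [KleeneAlgebra K] :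
    ∃ S : ∀ (ι : Type) [Fintype ι] [DecidableEq ι], Matrix ι ι K → Matrix ι ι K,
      (∀ (ι : Type) [Fintype ι] [DecidableEq ι] (E : Matrix ι ι K),
        ∀ i j, ((1 : Matrix ι ι K) + E * S ι E) i j ≤ S ι E i j) ∧
      (∀ (ι : Type) [Fintype ι] [DecidableEq ι] (E : Matrix ι ι K),
        ∀ i j, ((1 : Matrix ι ι K) + S ι E * E) i j ≤ S ι E i j) ∧
      (∀ (ι : Type) [Fintype ι] [DecidableEq ι] (A B X : Matrix ι ι K),
        (∀ i j, (B + A * X) i j ≤ X i j) → ∀ i j, (S ι A * B) i j ≤ X i j) ∧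
      (∀ (ι : Type) [Fintype ι] [DecidableEq ι] (A B X : Matrix ι ι K),
        (∀ i j, (B + X * A) i j ≤ X i j) → ∀ i j, (B * S ι A) i j ≤ X i j) ∧
      (∀ (ι κ : Type) [Fintype ι] [DecidableEq ι] [Fintype κ] [DecidableEq κ]
        (A : Matrix ι ι K) (B : Matrix ι κ K) (C : Matrix κ ι K)
        (D : Matrix κ κ K),
        S (ι ⊕ κ) (Matrix.fromBlocks A B C D) =
          Matrix.fromBlocks
            (S ι (A + B * S κ D * C))
            (S ι (A + B * S κ D * C) * B * S κ D)
            (S κ D * C * S ι (A + B * S κ D * C))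
            (S κ D + S κ D * C * S ι (A + B * S κ D * C) * B * S κ D)) := by
  choose S hS using fun (ι : Type) [Fintype ι] [DecidableEq ι] (E : Matrix ι ι K) =>
    exists_isStarOf E
  refine ⟨S, fun ι _ _ E => ?_, fun ι _ _ E => ?_, fun ι _ _ A B X h => ?_,
    fun ι _ _ A B X h => ?_, fun ι κ _ _ _ _ A B C D => ?_⟩
  · exact Matrix.add_le (hS ι E).one_le_star (hS ι E).mul_star_le_star
  · exact Matrix.add_le (hS ι E).one_le_star (hS ι E).star_mul_le_star
  · obtain ⟨hB, hX⟩ := Matrix.add_le_iff.1 (Matrix.le_def.2 h)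
    exact (hS ι A).star_mul_le hB hX
  · obtain ⟨hB, hX⟩ := Matrix.add_le_iff.1 (Matrix.le_def.2 h)
    exact (hS ι A).mul_star_le hB hX
  · exact (hS _ _).unique (isStarOf_fromBlocks (hS κ D) (hS ι _))
end

section
/- In any Kleene algebra, for a 2 × 2 matrix [[a,b],[c,d]], the star equals [[(a + b d* c)*, (a + b d* c)* b d*],[(d + c a* b)* c a*, (d + c a* b)*]], and this matrix satisfies the Kleene algebra star axioms 1 + E E* ≤ E* and the least-solution property for matrix inequalities. -/
open Computability

open Matrix

section Aux

variable {K : Type} [KleeneAlgebra K]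

private lemma sup_mul' (x y z : K) : (x ⊔ y) * z = x * z ⊔ y * z := by
  simp [← add_eq_sup, add_mul]

private lemma mul_sup' (x y z : K) : z * (x ⊔ y) = z * x ⊔ z * y := by
  simp [← add_eq_sup, mul_add]

/-- `δ∗ c a∗ ≤ d∗ c α∗` -/
private lemma core (a b c d : K) :
    (d ⊔ c * (a∗ * b))∗ * (c * a∗) ≤ d∗ * (c * (a ⊔ b * (d∗ * c))∗) := by
  set α := a ⊔ b * (d∗ * c) with hα
  apply kstar_mul_le
  · calc c * a∗ ≤ c * α∗ := mul_le_mul_right (kstar_mono le_sup_left) c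
      _ ≤ d∗ * (c * α∗) := le_mul_of_one_le_left' one_le_kstar
  · rw [sup_mul']
    apply sup_le
    · calc d * (d∗ * (c * α∗)) = d * d∗ * (c * α∗) := by rw [mul_assoc]
        _ ≤ d∗ * (c * α∗) := mul_le_mul_left mul_kstar_le_kstar _
    · have h1 : b * (d∗ * (c * α∗)) = b * (d∗ * c) * α∗ := by
        rw [mul_assoc, mul_assoc]
      have h2 : b * (d∗ * c) * α∗ ≤ α∗ :=
        (mul_le_mul_left le_sup_right _).trans mul_kstar_le_kstar
      have h3 : a∗ * α∗ ≤ α∗ := by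
        calc a∗ * α∗ ≤ α∗ * α∗ := mul_le_mul_left (kstar_mono le_sup_left) _
          _ = α∗ := kstar_mul_kstar α
      calc c * (a∗ * b) * (d∗ * (c * α∗)) = c * (a∗ * (b * (d∗ * (c * α∗)))) := by
            rw [mul_assoc, mul_assoc]
        _ ≤ c * (a∗ * α∗) := by
            exact mul_le_mul_right (mul_le_mul_right (h1 ▸ h2) _) _
        _ ≤ c * α∗ := mul_le_mul_right h3 _
        _ ≤ d∗ * (c * α∗) := le_mul_of_one_le_left' one_le_kstar

/-- `d∗ c α∗ ≤ δ∗ c a∗` -/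
private lemma core2 (a b c d : K) :
    d∗ * (c * (a ⊔ b * (d∗ * c))∗) ≤ (d ⊔ c * (a∗ * b))∗ * (c * a∗) := by
  set δ := d ⊔ c * (a∗ * b) with hδ
  rw [← mul_assoc]
  apply mul_kstar_le
  · calc d∗ * c ≤ δ∗ * c := mul_le_mul_left (kstar_mono le_sup_left) c
      _ ≤ δ∗ * (c * a∗) := mul_le_mul_right (le_mul_of_one_le_right' one_le_kstar) _
  · rw [mul_sup']
    apply sup_le
    · calc δ∗ * (c * a∗) * a = δ∗ * (c * (a∗ * a)) := by rw [mul_assoc, mul_assoc]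
        _ ≤ δ∗ * (c * a∗) := mul_le_mul_right (mul_le_mul_right kstar_mul_le_kstar c) _
    · calc δ∗ * (c * a∗) * (b * (d∗ * c)) = δ∗ * (c * (a∗ * b) * (d∗ * c)) := by
            rw [mul_assoc, mul_assoc, mul_assoc, mul_assoc]
        _ ≤ δ∗ * (δ * (d∗ * c)) := mul_le_mul_right (mul_le_mul_left le_sup_right _) _
        _ = δ∗ * δ * (d∗ * c) := by rw [mul_assoc]
        _ ≤ δ∗ * (d∗ * c) := mul_le_mul_left kstar_mul_le_kstar _
        _ ≤ δ∗ * (δ∗ * c) := mul_le_mul_right (mul_le_mul_left (kstar_mono le_sup_left) c) _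
        _ = δ∗ * δ∗ * c := by rw [mul_assoc]
        _ = δ∗ * c := by rw [kstar_mul_kstar]
        _ ≤ δ∗ * (c * a∗) := mul_le_mul_right (le_mul_of_one_le_right' one_le_kstar) _

end Aux

/-- In any Kleene algebra, for a `2 × 2` matrix `E = [[a, b], [c, d]]`, the
star of `E` is the matrix
`S = [[(a + b d* c)*, (a + b d* c)* b d*], [(d + c a* b)* c a*, (d + c a* b)*]]`:
this matrix satisfies the Kleene algebra star axiom `1 + E S ≤ S` (and the
symmetric axiom `1 + S E ≤ S`) and the least-solution property for matrix
inequalities, all with respect to the componentwise order. -/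
theorem two_by_two_star {K : Type} [KleeneAlgebra K] (a b c d : K) :
    ∀ (E S : Matrix (Fin 2) (Fin 2) K),
      E = !![a, b; c, d] →
      S = !![(a + b * d∗ * c)∗, (a + b * d∗ * c)∗ * b * d∗;
             (d + c * a∗ * b)∗ * c * a∗, (d + c * a∗ * b)∗] →
      (∀ i j, ((1 : Matrix (Fin 2) (Fin 2) K) + E * S) i j ≤ S i j) ∧
      (∀ i j, ((1 : Matrix (Fin 2) (Fin 2) K) + S * E) i j ≤ S i j) ∧
      (∀ B X : Matrix (Fin 2) (Fin 2) K,
        (∀ i j, (B + E * X) i j ≤ X i j) → ∀ i j, (S * B) i j ≤ X i j) ∧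
      (∀ B X : Matrix (Fin 2) (Fin 2) K,
        (∀ i j, (B + X * E) i j ≤ X i j) → ∀ i j, (B * S) i j ≤ X i j) := by
  rintro E S rfl rfl
  refine ⟨?_, ?_, ?_, ?_⟩
  · -- 1 + E S ≤ S
    intro i j
    fin_cases i <;> fin_cases j <;>
      simp [Matrix.mul_apply, Fin.sum_univ_two, Matrix.one_apply, mul_assoc]
    · constructor
      · exact (mul_le_mul_left le_sup_left _).trans mul_kstar_le_kstar
      · calc b * ((d ⊔ c * (a∗ * b))∗ * (c * a∗))
            ≤ b * (d∗ * (c * (a ⊔ b * (d∗ * c))∗)) := mul_le_mul_right (core a b c d) b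
          _ = b * (d∗ * c) * (a ⊔ b * (d∗ * c))∗ := by rw [mul_assoc, mul_assoc]
          _ ≤ (a ⊔ b * (d∗ * c)) * (a ⊔ b * (d∗ * c))∗ := mul_le_mul_left le_sup_right _
          _ ≤ (a ⊔ b * (d∗ * c))∗ := mul_kstar_le_kstar
    · constructor
      · calc a * ((a ⊔ b * (d∗ * c))∗ * (b * d∗))
            = a * (a ⊔ b * (d∗ * c))∗ * (b * d∗) := by rw [mul_assoc]
          _ ≤ (a ⊔ b * (d∗ * c)) * (a ⊔ b * (d∗ * c))∗ * (b * d∗) :=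
              mul_le_mul_left (mul_le_mul_left le_sup_left _) _
          _ ≤ (a ⊔ b * (d∗ * c))∗ * (b * d∗) := mul_le_mul_left mul_kstar_le_kstar _
      · calc b * (d ⊔ c * (a∗ * b))∗
            ≤ a∗ * (b * (d ⊔ c * (a∗ * b))∗) := le_mul_of_one_le_left' one_le_kstar
          _ ≤ (a ⊔ b * (d∗ * c))∗ * (b * d∗) := core2 d c b a
    · constructor
      · calc c * (a ⊔ b * (d∗ * c))∗
            ≤ d∗ * (c * (a ⊔ b * (d∗ * c))∗) := le_mul_of_one_le_left' one_le_kstar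
          _ ≤ (d ⊔ c * (a∗ * b))∗ * (c * a∗) := core2 a b c d
      · calc d * ((d ⊔ c * (a∗ * b))∗ * (c * a∗))
            = d * (d ⊔ c * (a∗ * b))∗ * (c * a∗) := by rw [mul_assoc]
          _ ≤ (d ⊔ c * (a∗ * b)) * (d ⊔ c * (a∗ * b))∗ * (c * a∗) :=
              mul_le_mul_left (mul_le_mul_left le_sup_left _) _
          _ ≤ (d ⊔ c * (a∗ * b))∗ * (c * a∗) := mul_le_mul_left mul_kstar_le_kstar _
    · constructor
      · calc c * ((a ⊔ b * (d∗ * c))∗ * (b * d∗))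
            ≤ c * (a∗ * (b * (d ⊔ c * (a∗ * b))∗)) := mul_le_mul_right (core d c b a) c
          _ = c * (a∗ * b) * (d ⊔ c * (a∗ * b))∗ := by rw [mul_assoc, mul_assoc]
          _ ≤ (d ⊔ c * (a∗ * b)) * (d ⊔ c * (a∗ * b))∗ := mul_le_mul_left le_sup_right _
          _ ≤ (d ⊔ c * (a∗ * b))∗ := mul_kstar_le_kstar
      · exact (mul_le_mul_left le_sup_left _).trans mul_kstar_le_kstar
  · -- 1 + S E ≤ S
    intro i j
    fin_cases i <;> fin_cases j <;>
      simp [Matrix.mul_apply, Fin.sum_univ_two, Matrix.one_apply, mul_assoc]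
    · exact ⟨(mul_le_mul_right le_sup_left _).trans kstar_mul_le_kstar,
        (mul_le_mul_right le_sup_right _).trans kstar_mul_le_kstar⟩
    · exact ⟨mul_le_mul_right (le_mul_of_one_le_right' one_le_kstar) _,
        mul_le_mul_right (mul_le_mul_right kstar_mul_le_kstar b) _⟩
    · exact ⟨mul_le_mul_right (mul_le_mul_right kstar_mul_le_kstar c) _,
        mul_le_mul_right (le_mul_of_one_le_right' one_le_kstar) _⟩
    · exact ⟨(mul_le_mul_right le_sup_right _).trans kstar_mul_le_kstar,
        (mul_le_mul_right le_sup_left _).trans kstar_mul_le_kstar⟩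
  · -- least prefixpoint, left
    intro B X h i j
    have h0 := h 0 j
    have h1 := h 1 j
    simp [Matrix.mul_apply, Matrix.vecMul, dotProduct, Fin.sum_univ_two,
      mul_assoc] at h0 h1
    obtain ⟨hp, hax, hbx⟩ := h0
    obtain ⟨hq, hcy, hdy⟩ := h1
    have hds : d∗ * X 1 j ≤ X 1 j := kstar_mul_le_self hdy
    have has : a∗ * X 0 j ≤ X 0 j := kstar_mul_le_self hax
    have hαx : (a ⊔ b * (d∗ * c))∗ * X 0 j ≤ X 0 j := by
      apply kstar_mul_le_self
      rw [sup_mul']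
      apply sup_le hax
      calc b * (d∗ * c) * X 0 j = b * (d∗ * (c * X 0 j)) := by rw [mul_assoc, mul_assoc]
        _ ≤ b * (d∗ * X 1 j) := mul_le_mul_right (mul_le_mul_right hcy _) b
        _ ≤ b * X 1 j := mul_le_mul_right hds b
        _ ≤ X 0 j := hbx
    have hδy : (d ⊔ c * (a∗ * b))∗ * X 1 j ≤ X 1 j := by
      apply kstar_mul_le_self
      rw [sup_mul']
      apply sup_le hdy
      calc c * (a∗ * b) * X 1 j = c * (a∗ * (b * X 1 j)) := by rw [mul_assoc, mul_assoc]
        _ ≤ c * (a∗ * X 0 j) := mul_le_mul_right (mul_le_mul_right hbx _) c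
        _ ≤ c * X 0 j := mul_le_mul_right has c
        _ ≤ X 1 j := hcy
    fin_cases i <;>
      simp [Matrix.mul_apply, Fin.sum_univ_two, mul_assoc]
    · constructor
      · exact (mul_le_mul_right hp _).trans hαx
      · calc (a ⊔ b * (d∗ * c))∗ * (b * (d∗ * B 1 j))
            ≤ (a ⊔ b * (d∗ * c))∗ * (b * (d∗ * X 1 j)) :=
              mul_le_mul_right (mul_le_mul_right (mul_le_mul_right hq _) b) _
          _ ≤ (a ⊔ b * (d∗ * c))∗ * (b * X 1 j) :=
              mul_le_mul_right (mul_le_mul_right hds b) _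
          _ ≤ (a ⊔ b * (d∗ * c))∗ * X 0 j := mul_le_mul_right hbx _
          _ ≤ X 0 j := hαx
    · constructor
      · calc (d ⊔ c * (a∗ * b))∗ * (c * (a∗ * B 0 j))
            ≤ (d ⊔ c * (a∗ * b))∗ * (c * (a∗ * X 0 j)) :=
              mul_le_mul_right (mul_le_mul_right (mul_le_mul_right hp _) c) _
          _ ≤ (d ⊔ c * (a∗ * b))∗ * (c * X 0 j) :=
              mul_le_mul_right (mul_le_mul_right has c) _
          _ ≤ (d ⊔ c * (a∗ * b))∗ * X 1 j := mul_le_mul_right hcy _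
          _ ≤ X 1 j := hδy
      · exact (mul_le_mul_right hq _).trans hδy
  · -- least postfixpoint, right
    intro B X h i j
    have h0 := h i 0
    have h1 := h i 1
    simp [Matrix.mul_apply, Matrix.mulVec, dotProduct, Fin.sum_univ_two,
      mul_assoc] at h0 h1
    obtain ⟨hp, hxa, hyc⟩ := h0
    obtain ⟨hq, hxb, hyd⟩ := h1
    have hds : X i 1 * d∗ ≤ X i 1 := mul_kstar_le_self hyd
    have has : X i 0 * a∗ ≤ X i 0 := mul_kstar_le_self hxa
    have hxα : X i 0 * (a ⊔ b * (d∗ * c))∗ ≤ X i 0 := by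
      apply mul_kstar_le_self
      rw [mul_sup']
      apply sup_le hxa
      calc X i 0 * (b * (d∗ * c)) = X i 0 * b * d∗ * c := by rw [mul_assoc, mul_assoc]
        _ ≤ X i 1 * d∗ * c := mul_le_mul_left (mul_le_mul_left hxb _) c
        _ ≤ X i 1 * c := mul_le_mul_left hds c
        _ ≤ X i 0 := hyc
    have hyδ : X i 1 * (d ⊔ c * (a∗ * b))∗ ≤ X i 1 := by
      apply mul_kstar_le_self
      rw [mul_sup']
      apply sup_le hyd
      calc X i 1 * (c * (a∗ * b)) = X i 1 * c * a∗ * b := by rw [mul_assoc, mul_assoc]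
        _ ≤ X i 0 * a∗ * b := mul_le_mul_left (mul_le_mul_left hyc _) b
        _ ≤ X i 0 * b := mul_le_mul_left has b
        _ ≤ X i 1 := hxb
    fin_cases j <;>
      simp [Matrix.mul_apply, Fin.sum_univ_two, mul_assoc]
    · constructor
      · exact (mul_le_mul_left hp _).trans hxα
      · calc B i 1 * ((d ⊔ c * (a∗ * b))∗ * (c * a∗))
            = B i 1 * (d ⊔ c * (a∗ * b))∗ * c * a∗ := by rw [mul_assoc, mul_assoc]
          _ ≤ X i 1 * (d ⊔ c * (a∗ * b))∗ * c * a∗ :=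
              mul_le_mul_left (mul_le_mul_left (mul_le_mul_left hq _) c) _
          _ ≤ X i 1 * c * a∗ := mul_le_mul_left (mul_le_mul_left hyδ c) _
          _ ≤ X i 0 * a∗ := mul_le_mul_left hyc _
          _ ≤ X i 0 := has
    · constructor
      · calc B i 0 * ((a ⊔ b * (d∗ * c))∗ * (b * d∗))
            = B i 0 * (a ⊔ b * (d∗ * c))∗ * b * d∗ := by rw [mul_assoc, mul_assoc]
          _ ≤ X i 0 * (a ⊔ b * (d∗ * c))∗ * b * d∗ :=
              mul_le_mul_left (mul_le_mul_left (mul_le_mul_left hp _) b) _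
          _ ≤ X i 0 * b * d∗ := mul_le_mul_left (mul_le_mul_left hxα b) _
          _ ≤ X i 1 * d∗ := mul_le_mul_left hxb _
          _ ≤ X i 1 := hds
      · exact (mul_le_mul_left hq _).trans hyδ
end

section
/- For elements a, b, c of a Kleene algebra with a c = 0 and a b c = 0, we have a (b + b c a b)* c = a b (b + b c a b)* b c. -/
open Computability

lemma kstar_eq_one_add_mul_kstar' {K : Type*} [KleeneAlgebra K] (x : K) :
    x∗ = 1 + x * x∗ := by
  apply le_antisymm
  · apply kstar_le_of_mul_le_right (le_add_of_nonneg_right zero_le)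
    calc x * (1 + x * x∗) = x * 1 + x * (x * x∗) := by rw [mul_add]
    _ ≤ x * x∗ + x * x∗ := by
        apply add_le_add
        · exact mul_le_mul_right one_le_kstar x
        · exact mul_le_mul_right mul_kstar_le_kstar x
    _ ≤ 1 + x * x∗ := by
        rw [add_idem]
        exact le_add_of_nonneg_left zero_le
  · exact add_le one_le_kstar mul_kstar_le_kstar

lemma kstar_eq_one_add_kstar_mul' {K : Type*} [KleeneAlgebra K] (x : K) :
    x∗ = 1 + x∗ * x := by
  apply le_antisymm
  · apply kstar_le_of_mul_le_left (le_add_of_nonneg_right zero_le)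
    calc (1 + x∗ * x) * x = 1 * x + x∗ * x * x := by rw [add_mul]
    _ ≤ x∗ * x + x∗ * x := by
        apply add_le_add
        · exact mul_le_mul_left one_le_kstar x
        · exact mul_le_mul_left kstar_mul_le_kstar x
    _ ≤ 1 + x∗ * x := by
        rw [add_idem]
        exact le_add_of_nonneg_left zero_le
  · exact add_le one_le_kstar kstar_mul_le_kstar

/-- In any Kleene algebra, if `a c = 0` and `a b c = 0` (with `a, b, c`
playing the roles of `sᵀ`, `B`, `t`), then
`a (b + b c a b)* c = a b (b + b c a b)* b c`. -/
theorem kat_asterate_core {K : Type*} [KleeneAlgebra K] (a b c : K)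
    (h1 : a * c = 0) (h2 : a * b * c = 0) :
    a * (b + b * c * a * b)∗ * c = a * b * (b + b * c * a * b)∗ * (b * c) := by
  set x := b + b * c * a * b with hx
  have lhs : a * x∗ * c = a * b * x∗ * c := by
    conv_lhs => rw [kstar_eq_one_add_mul_kstar' x]
    have : a * (1 + x * x∗) * c
        = a * c + a * b * x∗ * c + a * b * c * (a * b * x∗ * c) := by
      rw [hx]
      simp only [mul_add, add_mul, mul_one, one_mul, mul_assoc]
      abel
    rw [this, h1, h2, zero_mul, zero_add, add_zero]
  have rhs : a * b * x∗ * c = a * b * x∗ * (b * c) := by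
    conv_lhs => rw [kstar_eq_one_add_kstar_mul' x]
    have : a * b * (1 + x∗ * x) * c
        = a * b * c + a * b * x∗ * (b * c) + a * b * x∗ * (b * c * (a * b * c)) := by
      rw [hx]
      simp only [mul_add, add_mul, mul_one, one_mul, mul_assoc]
      abel
    rw [this, h2, zero_add, mul_zero, mul_zero, add_zero]
  rw [lhs, rhs]
end

section
/- In any Kleene algebra, if a c = 0 and a b c = 0 (so that a b* c = a b* b b c), then (a b* c)* = 1 + a (b + b c a b)* c. -/
open Computability

section Aux

variable {K : Type*} [KleeneAlgebra K]

private lemma ka_le_add_left (a b : K) : a ≤ a + b := by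
  rw [add_eq_sup]; exact le_sup_left

private lemma ka_le_add_right (a b : K) : b ≤ a + b := by
  rw [add_eq_sup]; exact le_sup_right

/-- Star unfolding: `a∗ = 1 + a * a∗`. -/
private lemma ka_kstar_unfold (a : K) : a∗ = 1 + a * a∗ := by
  refine le_antisymm ?_ (add_le one_le_kstar mul_kstar_le_kstar)
  refine kstar_le_of_mul_le_right (ka_le_add_left _ _) ?_
  rw [mul_add, mul_one]
  refine add_le ?_ ?_
  · exact (le_mul_of_one_le_right' one_le_kstar).trans (ka_le_add_right 1 (a * a∗))
  · exact le_trans (mul_le_mul_right mul_kstar_le_kstar a) (ka_le_add_right _ _)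

/-- `a * a∗ = a∗ * a`. -/
private lemma ka_kstar_comm (a : K) : a * a∗ = a∗ * a := by
  refine le_antisymm ?_ ?_
  · refine mul_kstar_le (le_mul_of_one_le_left' one_le_kstar) ?_
    exact mul_le_mul_left kstar_mul_le_kstar a
  · refine kstar_mul_le (le_mul_of_one_le_right' one_le_kstar) ?_
    exact mul_le_mul_right mul_kstar_le_kstar a

end Aux

/-- In any Kleene algebra, if `a c = 0` and `a b c = 0` (so that
`a b* c = a b* b b c`), then `(a b* c)* = 1 + a (b + b c a b)* c`. -/
theorem kat_asterate_lemma_core {K : Type*} [KleeneAlgebra K] (a b c : K)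
    (h1 : a * c = 0) (h2 : a * b * c = 0) :
    (a * b∗ * c)∗ = 1 + a * (b + b * c * a * b)∗ * c := by
  set e : K := b + b * c * a * b with he
  have h2a : a * (b * c) = 0 := by rw [← mul_assoc, h2]
  have h1' : ∀ x : K, a * (c * x) = 0 := fun x => by
    rw [← mul_assoc, h1, zero_mul]
  have h2' : ∀ x : K, a * (b * (c * x)) = 0 := fun x => by
    rw [← mul_assoc, ← mul_assoc, h2, zero_mul]
  -- basic inequalities
  have hbe : b ≤ e := ka_le_add_left _ _
  have hbe' : (b : K)∗ ≤ e∗ := kstar_mono hbe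
  have hbcabe : b * c * a * b ≤ e := ka_le_add_right _ _
  have swap : ∀ X : K, b * (b * (b∗ * X)) = b * b∗ * (b * X) := fun X => by
    calc b * (b * (b∗ * X)) = b * (b * b∗ * X) := by rw [mul_assoc b b∗ X]
      _ = b * (b∗ * b * X) := by rw [ka_kstar_comm]
      _ = b * b∗ * (b * X) := by simp only [mul_assoc]
  -- the key rewriting: a b∗ c = a (b b b∗) c
  have h3 : a * b∗ * c = a * (b * (b * b∗)) * c := by
    have hb : (b : K)∗ = 1 + (b + b * (b * b∗)) := by
      calc (b : K)∗ = 1 + b * b∗ := ka_kstar_unfold b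
        _ = 1 + b * (1 + b * b∗) := by
            conv_lhs => rw [ka_kstar_unfold b]
        _ = 1 + (b + b * (b * b∗)) := by rw [mul_add, mul_one]
    conv_lhs => rw [hb]
    simp only [mul_add, add_mul, mul_one, one_mul, mul_assoc, h1, h2a, mul_zero,
      zero_mul, add_zero, zero_add]
  refine le_antisymm ?_ ?_
  · -- (a b∗ c)∗ ≤ 1 + a e∗ c
    refine kstar_le_of_mul_le_right (ka_le_add_left _ _) ?_
    rw [mul_add, mul_one]
    refine add_le ?_ ?_
    · -- a b∗ c ≤ 1 + a e∗ c
      refine le_trans ?_ (ka_le_add_right _ _)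
      exact mul_le_mul_left (mul_le_mul_right hbe' a) c
    · -- a b∗ c * (a e∗ c) ≤ 1 + a e∗ c
      refine le_trans ?_ (ka_le_add_right 1 (a * e∗ * c))
      have he2 : e∗ = 1 + (b * e∗ + b * c * a * b * e∗) := by
        calc e∗ = 1 + e * e∗ := ka_kstar_unfold e
          _ = 1 + (b * e∗ + b * c * a * b * e∗) := by rw [he, add_mul]
      have expand : a * b∗ * c * (a * e∗ * c)
          = a * (b * (b * (b∗ * (c * (a * (b * (e∗ * c))))))) := by
        rw [h3]
        conv_lhs => rw [he2]
        simp only [mul_add, add_mul, mul_one, one_mul, mul_assoc, h1, h1', h2', mul_zero,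
          zero_mul, add_zero, zero_add]
      rw [expand]
      have t1 : b * b∗ ≤ e∗ := mul_kstar_le_kstar.trans hbe'
      have t2 : b * c * a * b ≤ e∗ := hbcabe.trans le_kstar
      calc a * (b * (b * (b∗ * (c * (a * (b * (e∗ * c)))))))
          = a * (b * b∗ * (b * (c * (a * (b * (e∗ * c)))))) := by rw [swap]
        _ = a * (b * b∗ * (b * c * a * b * (e∗ * c))) := by simp only [mul_assoc]
        _ ≤ a * (e∗ * (e∗ * (e∗ * c))) := by
            refine mul_le_mul_right ?_ a
            refine mul_le_mul' t1 ?_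
            exact mul_le_mul_left t2 (e∗ * c)
        _ = a * e∗ * c := by
            simp only [← mul_assoc, kstar_mul_kstar]
  · -- 1 + a e∗ c ≤ (a b∗ c)∗
    refine add_le one_le_kstar ?_
    set S : K := (a * b∗ * c)∗ with hS
    have key : a * e∗ ≤ S * (a * b∗) := by
      refine mul_kstar_le ?_ ?_
      · calc a = 1 * (a * 1) := by rw [one_mul, mul_one]
          _ ≤ S * (a * b∗) := mul_le_mul' one_le_kstar (mul_le_mul_right one_le_kstar a)
      · -- S * (a * b∗) * e ≤ S * (a * b∗)
        rw [he, mul_add]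
        refine add_le ?_ ?_
        · calc S * (a * b∗) * b = S * (a * (b∗ * b)) := by simp only [mul_assoc]
            _ ≤ S * (a * b∗) := mul_le_mul_right (mul_le_mul_right kstar_mul_le_kstar a) S
        · calc S * (a * b∗) * (b * c * a * b)
              = S * (a * (b∗ * b) * c) * (a * b) := by simp only [mul_assoc]
            _ ≤ S * (a * b∗ * c) * (a * b) := by
                refine mul_le_mul_left (mul_le_mul_right ?_ S) (a * b)
                exact mul_le_mul_left (mul_le_mul_right kstar_mul_le_kstar a) c
            _ ≤ S * (a * b) := mul_le_mul_left kstar_mul_le_kstar (a * b)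
            _ ≤ S * (a * b∗) := mul_le_mul_right (mul_le_mul_right le_kstar a) S
    calc a * e∗ * c ≤ S * (a * b∗) * c := mul_le_mul_left key c
      _ = S * (a * b∗ * c) := by rw [mul_assoc]
      _ ≤ S := kstar_mul_le_kstar
end

section
/- Sets of guarded strings over finite alphabets P (atomic programs) and B (primitive tests), with union as +, the partial concatenation product C · D = {x ⋄ y : x ∈ C, y ∈ D}, unit A_B (the set of atoms), star C* = ⋃_{n≥0} Cⁿ, and complementation on subsets of A_B defined by A_B − C, form a Kleene algebra with tests. -/
/-- A guarded string over atomic programs `P` and primitive tests `B` is a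
sequence `α₀ p₁ α₁ ⋯ pₖ αₖ` where each `αᵢ` is an atom of the free Boolean
algebra on `B` (identified with a function `B → Bool`) and each `pᵢ ∈ P`. -/
def GuardedString (P B : Type) : Type := (B → Bool) × List (P × (B → Bool))

/-- The first atom of a guarded string. -/
def GuardedString.first {P B : Type} (x : GuardedString P B) : B → Bool := x.1

/-- The last atom of a guarded string. -/
def GuardedString.last {P B : Type} (x : GuardedString P B) : B → Bool :=
  (x.2.map Prod.snd).getLastD x.1

/-- The partial concatenation (coalesced product) of sets of guarded strings:
`C ⋄ D = {x ⋄ y : x ∈ C, y ∈ D}` where `x ⋄ y` is defined iff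
`last x = first y`. -/
def gsProd {P B : Type} (C D : Set (GuardedString P B)) :
    Set (GuardedString P B) :=
  {z | ∃ x ∈ C, ∃ y ∈ D, GuardedString.last x = GuardedString.first y ∧
    z = (x.1, x.2 ++ y.2)}

/-- The unit: the set of all atoms, viewed as length-zero guarded strings. -/
def gsOne (P B : Type) : Set (GuardedString P B) := {x | x.2 = []}

/-- Iterated product of a set of guarded strings. -/
def gsPow {P B : Type} (C : Set (GuardedString P B)) : ℕ → Set (GuardedString P B)
  | 0 => gsOne P B
  | n + 1 => gsProd C (gsPow C n)

/-- The asterate `C* = ⋃_{n ≥ 0} Cⁿ`. -/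
def gsStar {P B : Type} (C : Set (GuardedString P B)) : Set (GuardedString P B) :=
  ⋃ n : ℕ, gsPow C n

/-- The complement of a set of atoms (a test): `A_B − C`. -/
def gsCompl {P B : Type} (C : Set (GuardedString P B)) :
    Set (GuardedString P B) := gsOne P B \ C

/-! Writing a guarded string as its first atom followed by a list of (program, atom) pairs,
`x ⋄ y` keeps the first atom of `x` and concatenates the lists, and `last (x ⋄ y) = last y`.
So the product of sets is associative with the atoms as unit, and it distributes over
arbitrary unions; the star axioms then follow from `C* = ⋃ Cⁿ` by induction on `n`.
Two atoms coalesce only when they are equal, so on tests the product is intersection and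
the test axioms are those of the Boolean algebra of sets of atoms. -/

namespace GuardedString

variable {P B : Type}

theorem last_eq_first_of_mem_gsOne {x : GuardedString P B} (hx : x ∈ gsOne P B) :
    x.last = x.first := by
  simp [last, first, show x.2 = [] from hx]

theorem last_coalesce {x y : GuardedString P B} (h : x.last = y.first) :
    last ((x.1, x.2 ++ y.2) : GuardedString P B) = y.last := by
  simp only [last, first] at h ⊢
  simp [List.getLast?_append, ← h]

theorem coalesce_eq_left_of_mem_gsOne {x y : GuardedString P B} (hy : y ∈ gsOne P B) :
    ((x.1, x.2 ++ y.2) : GuardedString P B) = x :=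
  Prod.ext rfl ((congrArg (x.2 ++ ·) hy).trans x.2.append_nil)

theorem coalesce_eq_right_of_mem_gsOne {x y : GuardedString P B} (hx : x ∈ gsOne P B)
    (h : x.last = y.first) : ((x.1, x.2 ++ y.2) : GuardedString P B) = y :=
  Prod.ext ((last_eq_first_of_mem_gsOne hx).symm.trans h) (congrArg (· ++ y.2) hx)

end GuardedString

open GuardedString

section Semiring

variable {P B : Type}

theorem gsProd_mono {C C' D D' : Set (GuardedString P B)} (hC : C ⊆ C') (hD : D ⊆ D') :
    gsProd C D ⊆ gsProd C' D' := by
  rintro z ⟨x, hx, y, hy, hxy, rfl⟩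
  exact ⟨x, hC hx, y, hD hy, hxy, rfl⟩

theorem gsProd_assoc (C D E : Set (GuardedString P B)) :
    gsProd (gsProd C D) E = gsProd C (gsProd D E) := by
  ext z
  constructor
  · rintro ⟨_, ⟨x, hx, y, hy, hxy, rfl⟩, v, hv, hyv, rfl⟩
    rw [last_coalesce hxy] at hyv
    exact ⟨x, hx, _, ⟨y, hy, v, hv, hyv, rfl⟩, hxy, Prod.ext rfl (List.append_assoc _ _ _)⟩
  · rintro ⟨x, hx, _, ⟨y, hy, v, hv, hyv, rfl⟩, hxy, rfl⟩
    exact ⟨_, ⟨x, hx, y, hy, hxy, rfl⟩, v, hv, (last_coalesce (y := y) hxy).trans hyv,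
      Prod.ext rfl (List.append_assoc _ _ _).symm⟩

theorem gsOne_gsProd (C : Set (GuardedString P B)) : gsProd (gsOne P B) C = C := by
  ext z
  constructor
  · rintro ⟨x, hx, y, hy, hxy, rfl⟩
    rwa [coalesce_eq_right_of_mem_gsOne hx hxy]
  · intro hz
    exact ⟨(z.1, []), rfl, z, hz, rfl, rfl⟩

theorem gsProd_gsOne (C : Set (GuardedString P B)) : gsProd C (gsOne P B) = C := by
  ext z
  constructor
  · rintro ⟨x, hx, y, hy, -, rfl⟩
    rwa [coalesce_eq_left_of_mem_gsOne hy]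
  · intro hz
    exact ⟨z, hz, (z.last, []), rfl, rfl, (coalesce_eq_left_of_mem_gsOne rfl).symm⟩

theorem gsProd_union (C D E : Set (GuardedString P B)) :
    gsProd C (D ∪ E) = gsProd C D ∪ gsProd C E := by
  ext z
  simp only [gsProd, Set.mem_ofPred_eq, Set.mem_union]
  aesop

theorem union_gsProd (C D E : Set (GuardedString P B)) :
    gsProd (C ∪ D) E = gsProd C E ∪ gsProd D E := by
  ext z
  simp only [gsProd, Set.mem_ofPred_eq, Set.mem_union]
  aesop

theorem gsProd_empty (C : Set (GuardedString P B)) : gsProd C ∅ = ∅ := by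
  ext z
  simp [gsProd]

theorem empty_gsProd (C : Set (GuardedString P B)) : gsProd ∅ C = ∅ := by
  ext z
  simp [gsProd]

theorem gsProd_iUnion {ι : Type*} (C : Set (GuardedString P B))
    (D : ι → Set (GuardedString P B)) :
    gsProd C (⋃ i, D i) = ⋃ i, gsProd C (D i) := by
  ext z
  simp only [gsProd, Set.mem_ofPred_eq, Set.mem_iUnion]
  aesop

theorem iUnion_gsProd {ι : Type*} (C : ι → Set (GuardedString P B))
    (D : Set (GuardedString P B)) :
    gsProd (⋃ i, C i) D = ⋃ i, gsProd (C i) D := by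
  ext z
  simp only [gsProd, Set.mem_ofPred_eq, Set.mem_iUnion]
  aesop

end Semiring

section Star

variable {P B : Type}

theorem gsPow_succ' (C : Set (GuardedString P B)) (n : ℕ) :
    gsPow C (n + 1) = gsProd (gsPow C n) C := by
  induction n with
  | zero => exact (gsProd_gsOne C).trans (gsOne_gsProd C).symm
  | succ n ih =>
    calc gsPow C (n + 2) = gsProd C (gsProd (gsPow C n) C) := congrArg (gsProd C) ih
      _ = gsProd (gsPow C (n + 1)) C := (gsProd_assoc _ _ _).symm

theorem gsPow_subset_gsStar (C : Set (GuardedString P B)) (n : ℕ) : gsPow C n ⊆ gsStar C :=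
  Set.subset_iUnion (gsPow C) n

theorem gsOne_union_gsProd_gsStar_subset (C : Set (GuardedString P B)) :
    gsOne P B ∪ gsProd C (gsStar C) ⊆ gsStar C := by
  refine Set.union_subset (gsPow_subset_gsStar C 0) ?_
  rw [gsStar, gsProd_iUnion]
  exact Set.iUnion_subset fun n => gsPow_subset_gsStar C (n + 1)

theorem gsOne_union_gsStar_gsProd_subset (C : Set (GuardedString P B)) :
    gsOne P B ∪ gsProd (gsStar C) C ⊆ gsStar C := by
  refine Set.union_subset (gsPow_subset_gsStar C 0) ?_
  rw [gsStar, iUnion_gsProd]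
  exact Set.iUnion_subset fun n => gsPow_succ' C n ▸ gsPow_subset_gsStar C (n + 1)

theorem gsStar_gsProd_subset {C D X : Set (GuardedString P B)} (h : D ∪ gsProd C X ⊆ X) :
    gsProd (gsStar C) D ⊆ X := by
  obtain ⟨hD, hCX⟩ := Set.union_subset_iff.mp h
  have hpow : ∀ n, gsProd (gsPow C n) D ⊆ X := by
    intro n
    induction n with
    | zero => exact (gsOne_gsProd D).subset.trans hD
    | succ n ih =>
      rw [gsPow, gsProd_assoc]
      exact (gsProd_mono subset_rfl ih).trans hCX
  rw [gsStar, iUnion_gsProd]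
  exact Set.iUnion_subset hpow

theorem gsProd_gsStar_subset {C D X : Set (GuardedString P B)} (h : D ∪ gsProd X C ⊆ X) :
    gsProd D (gsStar C) ⊆ X := by
  obtain ⟨hD, hXC⟩ := Set.union_subset_iff.mp h
  have hpow : ∀ n, gsProd D (gsPow C n) ⊆ X := by
    intro n
    induction n with
    | zero => exact (gsProd_gsOne D).subset.trans hD
    | succ n ih =>
      rw [gsPow_succ', ← gsProd_assoc]
      exact (gsProd_mono ih subset_rfl).trans hXC
  rw [gsStar, gsProd_iUnion]
  exact Set.iUnion_subset hpow

end Star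

section Tests

variable {P B : Type}

theorem gsProd_eq_inter_of_subset_gsOne {C D : Set (GuardedString P B)}
    (hC : C ⊆ gsOne P B) (hD : D ⊆ gsOne P B) : gsProd C D = C ∩ D := by
  ext z
  constructor
  · rintro ⟨x, hx, y, hy, hxy, rfl⟩
    constructor
    · rwa [coalesce_eq_left_of_mem_gsOne (hD hy)]
    · rwa [coalesce_eq_right_of_mem_gsOne (hC hx) hxy]
  · rintro ⟨hzC, hzD⟩
    exact ⟨z, hzC, z, hzD, last_eq_first_of_mem_gsOne (hC hzC),
      (coalesce_eq_left_of_mem_gsOne (hC hzC)).symm⟩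

theorem gsCompl_subset_gsOne (C : Set (GuardedString P B)) : gsCompl C ⊆ gsOne P B :=
  Set.sdiff_subset

end Tests

theorem guardedStrings_form_KAT_general (P B : Type) :
    -- idempotent semiring axioms
    (∀ C D E : Set (GuardedString P B), (C ∪ D) ∪ E = C ∪ (D ∪ E)) ∧
    (∀ C D : Set (GuardedString P B), C ∪ D = D ∪ C) ∧
    (∀ C : Set (GuardedString P B), C ∪ ∅ = C) ∧
    (∀ C : Set (GuardedString P B), C ∪ C = C) ∧
    (∀ C D E : Set (GuardedString P B),
      gsProd (gsProd C D) E = gsProd C (gsProd D E)) ∧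
    (∀ C : Set (GuardedString P B), gsProd (gsOne P B) C = C) ∧
    (∀ C : Set (GuardedString P B), gsProd C (gsOne P B) = C) ∧
    (∀ C D E : Set (GuardedString P B),
      gsProd C (D ∪ E) = gsProd C D ∪ gsProd C E) ∧
    (∀ C D E : Set (GuardedString P B),
      gsProd (C ∪ D) E = gsProd C E ∪ gsProd D E) ∧
    (∀ C : Set (GuardedString P B), gsProd ∅ C = ∅) ∧
    (∀ C : Set (GuardedString P B), gsProd C ∅ = ∅) ∧
    -- star axioms
    (∀ C : Set (GuardedString P B), gsOne P B ∪ gsProd C (gsStar C) ⊆ gsStar C) ∧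
    (∀ C : Set (GuardedString P B), gsOne P B ∪ gsProd (gsStar C) C ⊆ gsStar C) ∧
    (∀ C D X : Set (GuardedString P B),
      D ∪ gsProd C X ⊆ X → gsProd (gsStar C) D ⊆ X) ∧
    (∀ C D X : Set (GuardedString P B),
      D ∪ gsProd X C ⊆ X → gsProd D (gsStar C) ⊆ X) ∧
    -- the tests form an embedded Boolean algebra
    (∀ C D : Set (GuardedString P B), C ⊆ gsOne P B → D ⊆ gsOne P B →
      gsProd C D = C ∩ D) ∧
    (∀ C : Set (GuardedString P B), C ⊆ gsOne P B → gsCompl C ⊆ gsOne P B) ∧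
    (∀ C : Set (GuardedString P B), C ⊆ gsOne P B →
      gsProd C (gsCompl C) = ∅) ∧
    (∀ C : Set (GuardedString P B), C ⊆ gsOne P B →
      C ∪ gsCompl C = gsOne P B) ∧
    (∀ C : Set (GuardedString P B), C ⊆ gsOne P B →
      gsCompl (gsCompl C) = C) ∧
    (∀ C D : Set (GuardedString P B), C ⊆ gsOne P B → D ⊆ gsOne P B →
      gsProd C D = gsProd D C) ∧
    (∀ C D E : Set (GuardedString P B), C ⊆ gsOne P B → D ⊆ gsOne P B →
      E ⊆ gsOne P B → C ∪ gsProd D E = gsProd (C ∪ D) (C ∪ E)) := by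
  refine ⟨Set.union_assoc, Set.union_comm, Set.union_empty, Set.union_self,
    gsProd_assoc, gsOne_gsProd, gsProd_gsOne, gsProd_union, union_gsProd,
    empty_gsProd, gsProd_empty, gsOne_union_gsProd_gsStar_subset,
    gsOne_union_gsStar_gsProd_subset, fun _ _ _ => gsStar_gsProd_subset,
    fun _ _ _ => gsProd_gsStar_subset, fun _ _ => gsProd_eq_inter_of_subset_gsOne,
    fun C _ => gsCompl_subset_gsOne C, ?_, ?_, ?_, ?_, ?_⟩
  · intro C hC
    rw [gsProd_eq_inter_of_subset_gsOne hC (gsCompl_subset_gsOne C)]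
    exact Set.inter_sdiff_self C (gsOne P B)
  · exact fun C hC => Set.union_sdiff_cancel hC
  · exact fun C hC => Set.sdiff_sdiff_cancel_left hC
  · intro C D hC hD
    rw [gsProd_eq_inter_of_subset_gsOne hC hD, gsProd_eq_inter_of_subset_gsOne hD hC,
      Set.inter_comm]
  · intro C D E hC hD hE
    rw [gsProd_eq_inter_of_subset_gsOne hD hE, gsProd_eq_inter_of_subset_gsOne
      (Set.union_subset hC hD) (Set.union_subset hC hE)]
    exact Set.union_inter_distrib_left C D E

/-- Sets of guarded strings over finite alphabets `P` and `B`, with union as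
`+`, the coalesced product as `·`, `∅` as `0`, the set of atoms as `1`,
`C* = ⋃ₙ Cⁿ` as star, and complementation relative to the set of atoms on
tests, form a Kleene algebra with tests: all Kleene algebra axioms hold (with
`⊆` as the order), and the tests (subsets of the set of atoms) form a Boolean
algebra under `∪`, `⋄` and the relative complement. -/
theorem guardedStrings_form_KAT (P B : Type) [Fintype B] :
    -- idempotent semiring axioms
    (∀ C D E : Set (GuardedString P B), (C ∪ D) ∪ E = C ∪ (D ∪ E)) ∧
    (∀ C D : Set (GuardedString P B), C ∪ D = D ∪ C) ∧
    (∀ C : Set (GuardedString P B), C ∪ ∅ = C) ∧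
    (∀ C : Set (GuardedString P B), C ∪ C = C) ∧
    (∀ C D E : Set (GuardedString P B),
      gsProd (gsProd C D) E = gsProd C (gsProd D E)) ∧
    (∀ C : Set (GuardedString P B), gsProd (gsOne P B) C = C) ∧
    (∀ C : Set (GuardedString P B), gsProd C (gsOne P B) = C) ∧
    (∀ C D E : Set (GuardedString P B),
      gsProd C (D ∪ E) = gsProd C D ∪ gsProd C E) ∧
    (∀ C D E : Set (GuardedString P B),
      gsProd (C ∪ D) E = gsProd C E ∪ gsProd D E) ∧
    (∀ C : Set (GuardedString P B), gsProd ∅ C = ∅) ∧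
    (∀ C : Set (GuardedString P B), gsProd C ∅ = ∅) ∧
    -- star axioms
    (∀ C : Set (GuardedString P B), gsOne P B ∪ gsProd C (gsStar C) ⊆ gsStar C) ∧
    (∀ C : Set (GuardedString P B), gsOne P B ∪ gsProd (gsStar C) C ⊆ gsStar C) ∧
    (∀ C D X : Set (GuardedString P B),
      D ∪ gsProd C X ⊆ X → gsProd (gsStar C) D ⊆ X) ∧
    (∀ C D X : Set (GuardedString P B),
      D ∪ gsProd X C ⊆ X → gsProd D (gsStar C) ⊆ X) ∧
    -- the tests form an embedded Boolean algebra
    (∀ C D : Set (GuardedString P B), C ⊆ gsOne P B → D ⊆ gsOne P B →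
      gsProd C D = C ∩ D) ∧
    (∀ C : Set (GuardedString P B), C ⊆ gsOne P B → gsCompl C ⊆ gsOne P B) ∧
    (∀ C : Set (GuardedString P B), C ⊆ gsOne P B →
      gsProd C (gsCompl C) = ∅) ∧
    (∀ C : Set (GuardedString P B), C ⊆ gsOne P B →
      C ∪ gsCompl C = gsOne P B) ∧
    (∀ C : Set (GuardedString P B), C ⊆ gsOne P B →
      gsCompl (gsCompl C) = C) ∧
    (∀ C D : Set (GuardedString P B), C ⊆ gsOne P B → D ⊆ gsOne P B →
      gsProd C D = gsProd D C) ∧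
    (∀ C D E : Set (GuardedString P B), C ⊆ gsOne P B → D ⊆ gsOne P B →
      E ⊆ gsOne P B → C ∪ gsProd D E = gsProd (C ∪ D) (C ∪ E)) :=
  guardedStrings_form_KAT_general P B
end
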